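/- (Liveness vote-counting in case of honest disagreement) Suppose n ≥ 3f + 2p + 1 with f' ≤ f corrupt replicas, every honest replica casts exactly one first vote, and no non-timeout block receives first votes from more than f + p honest replicas. Then once a replica has recorded the first votes of all n - f' honest replicas (and possibly some corrupt votes), allVotes - maxVotes ≥ f + p + 1. -/

import Mathlib

/-!
Each non-timeout block `B` is voted for by at most `f + p` honest replicas, so at least
`(n - f') - (f + p)` recorded honest votes are not for `B`, and all of them count in
`allVotes - votes(B)`. Since `f' ≤ f` and `n ≥ 3f + 2p + 1`, this is at least `f + p + 1`.
-/

namespace Finset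

variable {α : Type*}

theorem card_filter_add_card_filter_not_le_of_subset [DecidableEq α] {s H : Finset α}
    {P Q : α → Prop} [DecidablePred P] [DecidablePred Q] (hPQ : ∀ a ∈ s, P a → Q a)
    (hH : H ⊆ s.filter Q) :
    (s.filter P).card + (H.filter (fun a => ¬ P a)).card ≤ (s.filter Q).card := by
  have hdisj : Disjoint (s.filter P) (H.filter (fun a => ¬ P a)) :=
    disjoint_filter_filter_not s H P
  rw [← card_union_of_disjoint hdisj]
  refine card_le_card (union_subset ?_ ((filter_subset _ _).trans hH))
  intro a ha
  rw [mem_filter] at ha ⊢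
  exact ⟨ha.1, hPQ a ha.1 ha.2⟩

theorem card_sub_le_card_filter_not {H : Finset α} {P : α → Prop} [DecidablePred P] {k : ℕ}
    (hk : (H.filter P).card ≤ k) : H.card - k ≤ (H.filter (fun a => ¬ P a)).card := by
  have := card_filter_add_card_filter_not (s := H) P
  omega

end Finset

open Finset

variable {α Block : Type*}

theorem card_filter_eq_some_add_le_card_filter_ne_none [DecidableEq α] [DecidableEq Block]
    {R honest : Finset α} {votes : α → Option Block} {B : Block} {m : ℕ}
    (hhonest : honest ⊆ R.filter (fun r => votes r ≠ none))
    (hB : (honest.filter (fun r => votes r = some B)).card ≤ m) :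
    (R.filter (fun r => votes r = some B)).card + (honest.card - m) ≤
      (R.filter (fun r => votes r ≠ none)).card := by
  have hsplit := card_filter_add_card_filter_not_le_of_subset
    (P := fun r => votes r = some B) (fun r _ h => by simp [h]) hhonest
  have := card_sub_le_card_filter_not hB
  omega

theorem sup_nonTimeoutVotes_le [DecidableEq Block] {R : Finset α} {votes : α → Option Block}
    {timeout : Block} {m : ℕ}
    (h : ∀ B, B ≠ timeout → (R.filter (fun r => votes r = some B)).card ≤ m) :
    R.sup (fun r =>
        match votes r with
        | none => 0
        | some B =>
            if B = timeout then 0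
            else (R.filter (fun r' => votes r' = some B)).card) ≤ m := by
  refine Finset.sup_le fun r _ => ?_
  match votes r with
  | none => exact Nat.zero_le m
  | some B =>
    by_cases hB : B = timeout
    · simp only [hB, if_true, Nat.zero_le]
    · simpa only [hB, if_false] using h B hB

/-- Liveness vote counting in case of honest disagreement: if every honest
replica casts exactly one first vote, no non-timeout block gets first votes
from more than `f + p` honest replicas, and a replica has recorded the first
votes of all honest replicas, then `allVotes - maxVotes ≥ f + p + 1`. -/
theorem liveness_vote_counting_disagreement
    {α Block : Type} [DecidableEq α] [DecidableEq Block]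
    (n f p f' : ℕ) (hn : n ≥ 3 * f + 2 * p + 1) (hf' : f' ≤ f)
    (R : Finset α) (hR : R.card = n)
    (corrupt : Finset α) (hcsub : corrupt ⊆ R) (hc : corrupt.card = f')
    (timeout : Block)
    (firstVote : α → Option Block)
    (hhonestVote : ∀ r ∈ R \ corrupt, firstVote r ≠ none)
    (hnomaj : ∀ B : Block, B ≠ timeout →
      ((R \ corrupt).filter (fun r => firstVote r = some B)).card ≤ f + p)
    (viewQ : α → Option Block)
    (hrecorded : ∀ r ∈ R \ corrupt, viewQ r = firstVote r) :
    (R.filter (fun r => viewQ r ≠ none)).card -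
      (R.sup (fun r =>
        match viewQ r with
        | none => 0
        | some B =>
            if B = timeout then 0
            else (R.filter (fun r' => viewQ r' = some B)).card)) ≥ f + p + 1 := by
  have hhonest_card : (R \ corrupt).card = n - f' := by
    rw [card_sdiff_of_subset hcsub, hR, hc]
  have hhonest_recorded : R \ corrupt ⊆ R.filter (fun r => viewQ r ≠ none) := fun r hr =>
    mem_filter.mpr ⟨(mem_sdiff.mp hr).1, hrecorded r hr ▸ hhonestVote r hr⟩
  have hmax := sup_nonTimeoutVotes_le (R := R) (votes := viewQ) (timeout := timeout)
    (m := (R.filter (fun r => viewQ r ≠ none)).card - (f + p + 1)) fun B hB => by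
      have hhonest_B : ((R \ corrupt).filter (fun r => viewQ r = some B)).card ≤ f + p := by
        rw [filter_congr fun r hr => by rw [hrecorded r hr]]
        exact hnomaj B hB
      have := card_filter_eq_some_add_le_card_filter_ne_none hhonest_recorded hhonest_B
      omega
  have hquorum : f + p + 1 ≤ (R.filter (fun r => viewQ r ≠ none)).card := by
    have := card_le_card hhonest_recorded
    omega
  exact le_tsub_of_add_le_left ((le_tsub_iff_right hquorum).mp hmax)
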